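/- For every real α with 0 < α ≤ 1/2, the infimum of 2(a+b+c)+d over all kissing-rectangles configurations (a,b,c,d) for α equals 4 + 2√(2α), and it is attained at (a,b,c,d) = (1, 1, √(α/2), √(2α)). -/
import Mathlib

/-- A kissing-rectangles configuration for `α`: two rectangles `a × b` and `c × d` of
areas `1` and `α` (in either order) sharing part of a vertical edge, with `b ≥ d`. -/
def IsKissingConfig (α a b c d : ℝ) : Prop :=
  0 < a ∧ 0 < b ∧ 0 < c ∧ 0 < d ∧ d ≤ b ∧
    ((a * b = 1 ∧ c * d = α) ∨ (a * b = α ∧ c * d = 1))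

private lemma amgm' (x y : ℝ) (hx : 0 ≤ x) (hy : 0 ≤ y) : 2 * Real.sqrt (x * y) ≤ x + y := by
  rw [Real.sqrt_mul hx y]
  nlinarith [Real.sq_sqrt hx, Real.sq_sqrt hy, Real.sqrt_nonneg x, Real.sqrt_nonneg y,
    sq_nonneg (Real.sqrt x - Real.sqrt y)]

/-- **Lemma 3.1, low-α case.** For `0 < α ≤ 1/2` the infimum of the double bubble
perimeter `2(a+b+c)+d` over all kissing-rectangles configurations equals `4 + 2√(2α)`,
attained at `(1, 1, √(α/2), √(2α))`. -/
theorem kissing_rectangles_min_low (α : ℝ) (h0 : 0 < α) (h1 : α ≤ 1 / 2) :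
    sInf {p : ℝ | ∃ a b c d : ℝ, IsKissingConfig α a b c d ∧ p = 2 * (a + b + c) + d} =
        4 + 2 * Real.sqrt (2 * α) ∧
      IsKissingConfig α 1 1 (Real.sqrt (α / 2)) (Real.sqrt (2 * α)) ∧
      2 * (1 + 1 + Real.sqrt (α / 2)) + Real.sqrt (2 * α) =
        4 + 2 * Real.sqrt (2 * α) := by
  have h2α : (0:ℝ) ≤ 2 * α := by linarith
  have hhalf : Real.sqrt (α / 2) = Real.sqrt (2 * α) / 2 := by
    rw [show α / 2 = (2 * α) / 4 by ring, Real.sqrt_div h2α,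
      show (4:ℝ) = 2 ^ 2 by norm_num, Real.sqrt_sq (by norm_num : (0:ℝ) ≤ 2)]
  have hs2pos : 0 < Real.sqrt (2 * α) := Real.sqrt_pos.mpr (by linarith)
  have hconfig : IsKissingConfig α 1 1 (Real.sqrt (α / 2)) (Real.sqrt (2 * α)) := by
    refine ⟨one_pos, one_pos, Real.sqrt_pos.mpr (by linarith), hs2pos, ?_, Or.inl ⟨by ring, ?_⟩⟩
    · exact Real.sqrt_le_one.mpr (by linarith)
    · rw [← Real.sqrt_mul (by linarith : (0:ℝ) ≤ α / 2)]
      rw [show α / 2 * (2 * α) = α ^ 2 by ring, Real.sqrt_sq h0.le]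
  have hval : 2 * (1 + 1 + Real.sqrt (α / 2)) + Real.sqrt (2 * α) =
      4 + 2 * Real.sqrt (2 * α) := by rw [hhalf]; ring
  have hlb : ∀ p ∈ {p : ℝ | ∃ a b c d : ℝ, IsKissingConfig α a b c d ∧
      p = 2 * (a + b + c) + d}, 4 + 2 * Real.sqrt (2 * α) ≤ p := by
    rintro p ⟨a, b, c, d, ⟨ha, hb, hc, hd, hdb, hcase⟩, rfl⟩
    rcases hcase with ⟨hab, hcd⟩ | ⟨hab, hcd⟩
    · have H1 : 2 * Real.sqrt (a * b) ≤ a + b := amgm' a b ha.le hb.le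
      rw [hab, Real.sqrt_one] at H1
      have H2 : 2 * Real.sqrt ((2 * c) * d) ≤ 2 * c + d := amgm' (2 * c) d (by linarith) hd.le
      rw [show (2 * c) * d = 2 * α by rw [← hcd]; ring] at H2
      linarith
    · have H1 : 2 * Real.sqrt ((2 * a) * b) ≤ 2 * a + b := amgm' (2 * a) b (by linarith) hb.le
      rw [show (2 * a) * b = 2 * α by rw [← hab]; ring] at H1
      have H2 : 2 * Real.sqrt (c * d) ≤ c + d := amgm' c d hc.le hd.le
      rw [hcd, Real.sqrt_one] at H2
      linarith
  refine ⟨le_antisymm ?_ (le_csInf ⟨_, ⟨1, 1, _, _, hconfig, rfl⟩⟩ hlb), hconfig, hval⟩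
  calc sInf _ ≤ 2 * (1 + 1 + Real.sqrt (α / 2)) + Real.sqrt (2 * α) :=
        csInf_le ⟨_, hlb⟩ ⟨1, 1, _, _, hconfig, rfl⟩
    _ = 4 + 2 * Real.sqrt (2 * α) := hval
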